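/- arXiv:2512.12948 — 2 statements merged into one kernel-verified Lean document; each statement's English description precedes it below -/
import Mathlib

section
/- Let M be a smooth manifold with a bivector field π ∈ Γ(Λ²TM) satisfying [π, π] = 0 (Schouten bracket). Then (Ω•(M), d_dR, ∧, ι_π) is an exact BV-algebra: ι_π is an operator of degree -2 and order at most 2 on the de Rham algebra satisfying [ι_π, [ι_π, d_dR]] = 0. -/
namespace KoszulBV

section Eps
variable {K : Type} [Field K]

lemma eps_mul_eps (m n : ℤ) : (-1:K)^m * (-1:K)^n = (-1:K)^(m+n) :=
  (zpow_add₀ (by norm_num) m n).symm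

lemma eps_two_mul (k : ℤ) : (-1:K)^(2*k) = 1 := by
  rw [zpow_mul]; norm_num

lemma eps_cancel {m n : ℤ} (k : ℤ) (h : m + n = 2 * k) : (-1:K)^m * (-1:K)^n = 1 := by
  rw [eps_mul_eps, h, eps_two_mul]

lemma eps_sub_two (p : ℤ) : (-1:K)^(p-2) = (-1:K)^p := by
  rw [zpow_sub₀ (by norm_num : (-1:K) ≠ 0)]; norm_num

lemma eps_sub_one (p : ℤ) : (-1:K)^(p-1) = -(-1:K)^p := by
  rw [zpow_sub₀ (by norm_num : (-1:K) ≠ 0)]; rw [zpow_one]; field_simp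

lemma eps_add_one (p : ℤ) : (-1:K)^(p+1) = -(-1:K)^p := by
  rw [zpow_add₀ (by norm_num : (-1:K) ≠ 0)]; norm_num

end Eps

structure Setup (K R A : Type) [Field K] [CommRing R] [Algebra K R]
    [AddCommGroup A] [Module K A] where
  Gr : ℤ → Submodule K A
  mul : A →ₗ[K] A →ₗ[K] A
  d : A →ₗ[K] A
  io : A →ₗ[K] A
  rho : R →ₗ[K] A
  P : R →ₗ[K] R →ₗ[K] R
  hPanti : ∀ f g : R, P f g = - P g f
  hPjac : ∀ f g h : R, P f (P g h) = P (P f g) h + P g (P f h)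
  hrho0 : ∀ f : R, rho f ∈ Gr 0
  hm : ∀ p q : ℤ, ∀ a ∈ Gr p, ∀ x ∈ Gr q, mul a x ∈ Gr (p + q)
  hcomm : ∀ p q : ℤ, ∀ a ∈ Gr p, ∀ x ∈ Gr q, mul a x = ((-1 : K) ^ (p * q)) • mul x a
  hassoc : ∀ a x c : A, mul (mul a x) c = mul a (mul x c)
  hd : ∀ p : ℤ, ∀ a ∈ Gr p, d a ∈ Gr (p + 1)
  hdd : ∀ a : A, d (d a) = 0
  hder : ∀ p : ℤ, ∀ a ∈ Gr p, ∀ x : A,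
      d (mul a x) = mul (d a) x + ((-1 : K) ^ p) • mul a (d x)
  hgen : ∀ N : Submodule K A, (∀ f : R, rho f ∈ N) → (∀ f : R, d (rho f) ∈ N) →
      (∀ x ∈ N, ∀ y ∈ N, mul x y ∈ N) → ∀ a : A, a ∈ N
  hio : ∀ p : ℤ, ∀ a ∈ Gr p, io a ∈ Gr (p - 2)
  hio0 : ∀ a ∈ Gr 0, io a = 0
  hio1 : ∀ a ∈ Gr 1, io a = 0
  hioP : ∀ f g : R, io (mul (d (rho f)) (d (rho g))) = rho (P f g)
  hso : ∀ p q r : ℤ, ∀ a ∈ Gr p, ∀ x ∈ Gr q, ∀ c ∈ Gr r,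
      io (mul (mul a x) c)
        = mul (io (mul a x)) c + mul a (io (mul x c))
            + ((-1 : K) ^ (p * q)) • mul x (io (mul a c))
          - mul (mul (io a) x) c - mul (mul a (io x)) c - mul (mul a x) (io c)

namespace Setup

variable {K R A : Type} [Field K] [CommRing R] [Algebra K R]
  [AddCommGroup A] [Module K A] (S : Setup K R A)

lemma grcast {p q : ℤ} {a : A} (h : p = q) (ha : a ∈ S.Gr p) : a ∈ S.Gr q := h ▸ ha

/-- Jacobi combination. -/
lemma jac3 (f g h : R) : S.P (S.P h f) g - S.P (S.P h g) f + S.P h (S.P g f) = 0 := by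
  have h1 : S.P (S.P h f) g = - S.P g (S.P h f) := S.hPanti _ _
  have h2 := S.hPjac g h f
  have h3 : S.P (S.P g h) f = - S.P (S.P h g) f := by
    rw [S.hPanti g h]; simp
  rw [h1, h2, h3]; abel

/-- Contraction operators. -/
def B (x : A) : A →ₗ[K] A :=
  S.io ∘ₗ S.mul.flip x - (S.mul.flip x) ∘ₗ S.io - S.mul.flip (S.io x)

lemma B_apply (x a : A) :
    S.B x a = S.io (S.mul a x) - S.mul (S.io a) x - S.mul a (S.io x) := rfl

def X (f : R) : A →ₗ[K] A :=
  S.io ∘ₗ S.mul.flip (S.d (S.rho f)) - (S.mul.flip (S.d (S.rho f))) ∘ₗ S.io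

lemma X_apply (f : R) (a : A) :
    S.X f a = S.io (S.mul a (S.d (S.rho f))) - S.mul (S.io a) (S.d (S.rho f)) := rfl

def Del : A →ₗ[K] A := S.io ∘ₗ S.d - S.d ∘ₗ S.io

lemma Del_apply (a : A) : S.Del a = S.io (S.d a) - S.d (S.io a) := rfl

def Dd (g : R) : A →ₗ[K] A := S.X g ∘ₗ S.d - S.d ∘ₗ S.X g

lemma Dd_apply (g : R) (a : A) : S.Dd g a = S.X g (S.d a) - S.d (S.X g a) := rfl

def Phi : A →ₗ[K] A := S.io ∘ₗ S.Del - S.Del ∘ₗ S.io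

lemma Phi_apply (a : A) : S.Phi a = S.io (S.Del a) - S.Del (S.io a) := rfl

/-- basic generator facts -/
lemma io_rho (f : R) : S.io (S.rho f) = 0 := S.hio0 _ (S.hrho0 f)

lemma drho_mem (f : R) : S.d (S.rho f) ∈ S.Gr 1 :=
  S.grcast (by norm_num) (S.hd 0 _ (S.hrho0 f))

lemma io_drho (f : R) : S.io (S.d (S.rho f)) = 0 := S.hio1 _ (S.drho_mem f)

lemma d_drho (f : R) : S.d (S.d (S.rho f)) = 0 := S.hdd _

lemma X_mem {p : ℤ} {a : A} (f : R) (ha : a ∈ S.Gr p) : S.X f a ∈ S.Gr (p-1) := by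
  rw [X_apply]
  exact Submodule.sub_mem _
    (S.grcast (by ring) (S.hio _ _ (S.hm _ _ a ha _ (S.drho_mem f))))
    (S.grcast (by ring) (S.hm _ _ _ (S.hio _ _ ha) _ (S.drho_mem f)))

lemma Del_mem {p : ℤ} {a : A} (ha : a ∈ S.Gr p) : S.Del a ∈ S.Gr (p-1) := by
  rw [Del_apply]
  exact Submodule.sub_mem _
    (S.grcast (by ring) (S.hio _ _ (S.hd _ _ ha)))
    (S.grcast (by ring) (S.hd _ _ (S.hio _ _ ha)))

lemma Dd_mem {p : ℤ} {a : A} (g : R) (ha : a ∈ S.Gr p) : S.Dd g a ∈ S.Gr p := by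
  rw [Dd_apply]
  exact Submodule.sub_mem _
    (S.grcast (by ring) (S.X_mem g (S.hd _ _ ha)))
    (S.grcast (by ring) (S.hd _ _ (S.X_mem g ha)))

lemma X_rho (f g : R) : S.X f (S.rho g) = 0 := by
  rw [X_apply, S.io_rho]
  have : S.mul (S.rho g) (S.d (S.rho f)) ∈ S.Gr 1 :=
    S.grcast (by norm_num) (S.hm 0 1 _ (S.hrho0 g) _ (S.drho_mem f))
  rw [S.hio1 _ this]; simp

lemma X_drho (f g : R) : S.X f (S.d (S.rho g)) = S.rho (S.P g f) := by
  rw [X_apply, S.io_drho, S.hioP g f]; simp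

lemma Del_rho (g : R) : S.Del (S.rho g) = 0 := by
  rw [Del_apply, S.io_drho, S.io_rho]; simp

lemma Del_drho (g : R) : S.Del (S.d (S.rho g)) = 0 := by
  rw [Del_apply, S.d_drho, S.io_drho]; simp

/-- expansion of ι on a product with `dρg`. -/
lemma io_mul_drho (g : R) (x : A) :
    S.io (S.mul x (S.d (S.rho g))) = S.mul (S.io x) (S.d (S.rho g)) + S.X g x := by
  rw [X_apply]; abel


variable {K R A : Type} [Field K] [CommRing R] [Algebra K R]
  [AddCommGroup A] [Module K A] (S : Setup K R A)

/-- The second-order relation in bracket form: `B c` deviation is a (signed) derivation. -/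
lemma S1 {p q r : ℤ} {a b c : A} (ha : a ∈ S.Gr p) (hb : b ∈ S.Gr q) (hc : c ∈ S.Gr r) :
    S.B c (S.mul a b)
      = S.mul a (S.B c b) + ((-1:K)^(p*q)) • S.mul b (S.B c a) := by
  have hso := S.hso p q r a ha b hb c hc
  -- T7 = T5
  have h7 : S.mul a (S.mul (S.io b) c) = S.mul (S.mul a (S.io b)) c := (S.hassoc _ _ _).symm
  -- T8 = T6
  have h8 : S.mul a (S.mul b (S.io c)) = S.mul (S.mul a b) (S.io c) := (S.hassoc _ _ _).symm
  -- T9 = e(q(p-2)) T4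
  have h9 : S.mul b (S.mul (S.io a) c)
      = ((-1:K)^(q*(p-2))) • S.mul (S.mul (S.io a) b) c := by
    rw [← S.hassoc, S.hcomm q (p-2) b hb (S.io a) (S.hio _ _ ha), map_smul,
      LinearMap.smul_apply]
  -- T10 = e(qp) T6
  have h10 : S.mul b (S.mul a (S.io c))
      = ((-1:K)^(q*p)) • S.mul (S.mul a b) (S.io c) := by
    rw [← S.hassoc, S.hcomm q p b hb a ha, map_smul, LinearMap.smul_apply]
  simp only [B_apply, map_sub, LinearMap.sub_apply]
  rw [hso, h7, h8, h9, h10]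
  have e1 : (-1:K)^(p*q) * (-1:K)^(q*(p-2)) = 1 := eps_cancel (p*q - q) (by ring)
  have e2 : (-1:K)^(p*q) * (-1:K)^(q*p) = 1 := eps_cancel (p*q) (by ring)
  match_scalars
  all_goals try ring1
  · linear_combination (norm := ring1) e1
  · linear_combination (norm := ring1) e2

/-- product rule for the contraction with a Hamiltonian field. -/
lemma PX {p q : ℤ} {a b : A} (f : R) (ha : a ∈ S.Gr p) (hb : b ∈ S.Gr q) :
    S.X f (S.mul a b)
      = S.mul a (S.X f b) + ((-1:K)^(p*q)) • S.mul b (S.X f a) := by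
  have hB : ∀ x : A, S.B (S.d (S.rho f)) x = S.X f x := by
    intro x
    rw [B_apply, X_apply, S.io_drho]
    simp
  have := S.S1 ha hb (S.drho_mem f)
  rwa [hB, hB, hB] at this

/-- `X f` commutes with multiplication by functions. -/
lemma R5 {p : ℤ} {a : A} (f g : R) (ha : a ∈ S.Gr p) :
    S.X f (S.mul a (S.rho g)) = S.mul (S.X f a) (S.rho g) := by
  rw [S.PX f ha (S.hrho0 g), S.X_rho,
    S.hcomm 0 (p-1) _ (S.hrho0 g) _ (S.X_mem f ha)]
  rw [smul_smul, eps_cancel 0 (by ring)]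
  simp

/-- `X f` on a product with an exact one-form. -/
lemma R6 {p : ℤ} {a : A} (f g : R) (ha : a ∈ S.Gr p) :
    S.X f (S.mul a (S.d (S.rho g)))
      = S.mul a (S.rho (S.P g f)) - S.mul (S.X f a) (S.d (S.rho g)) := by
  rw [S.PX f ha (S.drho_mem g), S.X_drho,
    S.hcomm 1 (p-1) _ (S.drho_mem g) _ (S.X_mem f ha), smul_smul]
  have : (-1:K)^(p*1) * (-1:K)^(1*(p-1)) = -1 := by
    rw [eps_mul_eps]
    have : p*1 + 1*(p-1) = 2*p + (-1) := by ring
    rw [this, zpow_add₀ (by norm_num : (-1:K) ≠ 0), eps_two_mul]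
    norm_num
  rw [this]
  simp [sub_eq_add_neg]

/-- Master induction principle. -/
lemma induction_principle (Good : A → Prop)
    (h0 : ∀ f : R, Good (S.rho f)) (h1 : ∀ f : R, Good (S.d (S.rho f)))
    (hmul : ∀ x y, Good x → Good y → Good (S.mul x y))
    (φ : A → Prop)
    (hφ : ∀ b, Good b → φ b)
    (φ0 : φ 0) (φadd : ∀ x y, φ x → φ y → φ (x + y))
    (φsmul : ∀ (c : K) (x : A), φ x → φ (c • x)) :
    ∀ a : A, φ a := by
  have hmem : ∀ a : A, a ∈ Submodule.span K {b | Good b} := by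
    apply S.hgen
    · exact fun f => Submodule.subset_span (h0 f)
    · exact fun f => Submodule.subset_span (h1 f)
    · intro x hx y hy
      refine Submodule.span_induction
        (p := fun x _ => S.mul x y ∈ Submodule.span K {b | Good b}) ?_ ?_ ?_ ?_ hx
      · intro x' hx'
        refine Submodule.span_induction
          (p := fun y _ => S.mul x' y ∈ Submodule.span K {b | Good b}) ?_ ?_ ?_ ?_ hy
        · exact fun y' hy' => Submodule.subset_span (hmul x' y' hx' hy')
        · simp
        · intro u v _ _ hu hv; rw [map_add]; exact Submodule.add_mem _ hu hv
        · intro c u _ hu; rw [map_smul]; exact Submodule.smul_mem _ c hu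
      · show S.mul 0 y ∈ _
        rw [map_zero, LinearMap.zero_apply]; exact Submodule.zero_mem _
      · intro u v _ _ hu hv
        show S.mul (u + v) y ∈ _
        rw [map_add, LinearMap.add_apply]
        exact Submodule.add_mem _ hu hv
      · intro c u _ hu
        show S.mul (c • u) y ∈ _
        rw [map_smul, LinearMap.smul_apply]
        exact Submodule.smul_mem _ c hu
  intro a
  exact Submodule.span_induction (p := fun x _ => φ x) (fun b hb => hφ b hb) φ0
    (fun x y _ _ => φadd x y) (fun c x _ => φsmul c x) (hmem a)

/-- T1: ι commutes with multiplication by functions (bracket form). -/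
lemma T1 : ∀ (x : A) (f : R), S.B (S.rho f) x = 0 := by
  have base0 : ∀ g f : R, S.B (S.rho f) (S.rho g) = 0 := by
    intro g f
    rw [B_apply, S.io_rho, S.io_rho]
    have : S.mul (S.rho g) (S.rho f) ∈ S.Gr 0 :=
      S.grcast (by norm_num) (S.hm 0 0 _ (S.hrho0 g) _ (S.hrho0 f))
    rw [S.hio0 _ this]; simp
  have base1 : ∀ g f : R, S.B (S.rho f) (S.d (S.rho g)) = 0 := by
    intro g f
    rw [B_apply, S.io_rho, S.io_drho]
    have : S.mul (S.d (S.rho g)) (S.rho f) ∈ S.Gr 1 :=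
      S.grcast (by norm_num) (S.hm 1 0 _ (S.drho_mem g) _ (S.hrho0 f))
    rw [S.hio1 _ this]; simp
  have key : ∀ x : A, (∀ f : R, S.B (S.rho f) x = 0) := by
    refine S.induction_principle
      (fun b => ∃ q, b ∈ S.Gr q ∧ (∀ f, S.B (S.rho f) b = 0) ∧
        ∀ (p : ℤ) (a : A), a ∈ S.Gr p → (∀ f, S.B (S.rho f) a = 0) →
          ∀ f, S.B (S.rho f) (S.mul a b) = 0)
      ?_ ?_ ?_ _ (fun b hb => hb.choose_spec.2.1) ?_ ?_ ?_
    · intro g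
      refine ⟨0, S.hrho0 g, base0 g, ?_⟩
      intro p a ha hFa f
      have h := S.S1 ha (S.hrho0 g) (S.hrho0 f)
      rw [hFa f, base0 g f] at h
      simpa using h
    · intro g
      refine ⟨1, S.drho_mem g, base1 g, ?_⟩
      intro p a ha hFa f
      have h := S.S1 ha (S.drho_mem g) (S.hrho0 f)
      rw [hFa f, base1 g f] at h
      simpa using h
    · rintro x y ⟨qx, hx, hFx, hTx⟩ ⟨qy, hy, hFy, hTy⟩
      refine ⟨qx + qy, S.hm _ _ _ hx _ hy, hTy qx x hx hFx, ?_⟩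
      intro p a ha hFa f
      have h1 := hTx p a ha hFa
      have h2 := hTy (p + qx) (S.mul a x) (S.hm _ _ _ ha _ hx) h1 f
      rwa [S.hassoc] at h2
    · intro f; simp
    · intro x y hx hy f; rw [map_add, hx f, hy f]; simp
    · intro c x hx f; rw [map_smul, hx f]; simp
  exact key

/-- T1 in multiplication form. -/
lemma io_mul_rho (x : A) (f : R) :
    S.io (S.mul x (S.rho f)) = S.mul (S.io x) (S.rho f) := by
  have h := S.T1 x f
  rw [B_apply, S.io_rho] at h
  have h2 : S.io (S.mul x (S.rho f)) - S.mul (S.io x) (S.rho f) = 0 := by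
    simpa using h
  exact sub_eq_zero.1 h2


/-- d on a product with an exact one-form. -/
lemma Rd1 {p : ℤ} {a : A} (g : R) (ha : a ∈ S.Gr p) :
    S.d (S.mul a (S.d (S.rho g))) = S.mul (S.d a) (S.d (S.rho g)) := by
  rw [S.hder p a ha, S.d_drho]; simp

/-- Δ on a product with a function. -/
lemma R7 {p : ℤ} {a : A} (g : R) (ha : a ∈ S.Gr p) :
    S.Del (S.mul a (S.rho g))
      = S.mul (S.Del a) (S.rho g) + ((-1:K)^p) • S.X g a := by
  rw [Del_apply, S.hder p a ha (S.rho g), map_add, map_smul,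
    S.io_mul_rho, S.io_mul_drho, S.io_mul_rho,
    S.hder (p-2) _ (S.hio p a ha) (S.rho g), eps_sub_two, Del_apply]
  simp only [map_sub, LinearMap.sub_apply, LinearMap.map_sub₂]
  module

/-- Δ on a product with an exact one-form. -/
lemma R8 {p : ℤ} {a : A} (g : R) (ha : a ∈ S.Gr p) :
    S.Del (S.mul a (S.d (S.rho g)))
      = S.mul (S.Del a) (S.d (S.rho g)) + S.X g (S.d a) - S.d (S.X g a) := by
  rw [Del_apply, S.Rd1 g ha, S.io_mul_drho, S.io_mul_drho, map_add,
    S.Rd1 g (S.hio p a ha), Del_apply]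
  simp only [map_sub, LinearMap.sub_apply, LinearMap.map_sub₂]
  module

/-- Hamiltonian Lie derivative on a product with a function. -/
lemma RD0 {p : ℤ} {a : A} (g h : R) (ha : a ∈ S.Gr p) :
    S.Dd g (S.mul a (S.rho h))
      = S.mul (S.Dd g a) (S.rho h) + ((-1:K)^p) • S.mul a (S.rho (S.P h g)) := by
  rw [Dd_apply, S.hder p a ha (S.rho h), map_add, map_smul,
    S.R5 g h (S.hd p a ha), S.R6 g h ha,
    S.R5 g h ha, S.hder (p-1) _ (S.X_mem g ha) (S.rho h), eps_sub_one, Dd_apply]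
  simp only [map_sub, LinearMap.sub_apply, LinearMap.map_sub₂]
  module

/-- Hamiltonian Lie derivative on a product with an exact one-form. -/
lemma RD1 {p : ℤ} {a : A} (g h : R) (ha : a ∈ S.Gr p) :
    S.Dd g (S.mul a (S.d (S.rho h)))
      = - S.mul (S.Dd g a) (S.d (S.rho h))
        - ((-1:K)^p) • S.mul a (S.d (S.rho (S.P h g))) := by
  rw [Dd_apply, S.Rd1 h ha, S.R6 g h (S.hd p a ha), S.R6 g h ha, map_sub,
    S.hder p a ha (S.rho (S.P h g)), S.Rd1 h (S.X_mem g ha), Dd_apply]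
  simp only [map_sub, LinearMap.sub_apply, LinearMap.map_sub₂]
  module


/-- T2: the Hamiltonian contractions anticommute. -/
lemma T2 : ∀ (x : A) (f g : R), S.X f (S.X g x) + S.X g (S.X f x) = 0 := by
  have mul0 : ∀ (w : A) (z : A), S.mul 0 z = 0 := by
    intro w z; rw [map_zero, LinearMap.zero_apply]
  have base0 : ∀ h f g : R, S.X f (S.X g (S.rho h)) + S.X g (S.X f (S.rho h)) = 0 := by
    intro h f g; rw [S.X_rho, S.X_rho, map_zero, map_zero, add_zero]
  have base1 : ∀ h f g : R,
      S.X f (S.X g (S.d (S.rho h))) + S.X g (S.X f (S.d (S.rho h))) = 0 := by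
    intro h f g; rw [S.X_drho, S.X_drho, S.X_rho, S.X_rho, add_zero]
  refine S.induction_principle
    (fun b => ∃ q, b ∈ S.Gr q ∧ (∀ f g, S.X f (S.X g b) + S.X g (S.X f b) = 0) ∧
      ∀ (p : ℤ) (a : A), a ∈ S.Gr p → (∀ f g, S.X f (S.X g a) + S.X g (S.X f a) = 0) →
        ∀ f g, S.X f (S.X g (S.mul a b)) + S.X g (S.X f (S.mul a b)) = 0)
    ?_ ?_ ?_ _ (fun b hb => hb.choose_spec.2.1) ?_ ?_ ?_
  · intro h
    refine ⟨0, S.hrho0 h, base0 h, ?_⟩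
    intro p a ha hFa f g
    rw [S.R5 g h ha, S.R5 f h (S.X_mem g ha), S.R5 f h ha, S.R5 g h (S.X_mem f ha),
      ← LinearMap.add_apply, ← map_add, hFa f g, mul0 a]
  · intro h
    refine ⟨1, S.drho_mem h, base1 h, ?_⟩
    intro p a ha hFa f g
    rw [S.R6 g h ha, map_sub, S.R5 f (S.P h g) ha, S.R6 f h (S.X_mem g ha),
      S.R6 f h ha, map_sub, S.R5 g (S.P h f) ha, S.R6 g h (S.X_mem f ha)]
    have hc : S.mul (S.X f (S.X g a)) (S.d (S.rho h))
        + S.mul (S.X g (S.X f a)) (S.d (S.rho h)) = 0 := by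
      rw [← LinearMap.add_apply, ← map_add, hFa f g, mul0 a]
    linear_combination (norm := module) hc
  · rintro x y ⟨qx, hx, hFx, hTx⟩ ⟨qy, hy, hFy, hTy⟩
    refine ⟨qx + qy, S.hm _ _ _ hx _ hy, hTy qx x hx hFx, ?_⟩
    intro p a ha hFa f g
    have h2 := hTy (p + qx) (S.mul a x) (S.hm _ _ _ ha _ hx) (hTx p a ha hFa) f g
    rwa [S.hassoc] at h2
  · intro f g; simp
  · intro x y hx hy f g
    simp only [map_add]
    have h1 := hx f g; have h2 := hy f g
    linear_combination (norm := module) h1 + h2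
  · intro c x hx f g
    simp only [map_smul]
    have h1 := hx f g
    linear_combination (norm := module) c • h1

/-- T3: ι commutes with the Hamiltonian contractions. -/
lemma T3 : ∀ (x : A) (f : R), S.io (S.X f x) = S.X f (S.io x) := by
  have base0 : ∀ h f : R, S.io (S.X f (S.rho h)) = S.X f (S.io (S.rho h)) := by
    intro h f; rw [S.X_rho, S.io_rho, map_zero, map_zero]
  have base1 : ∀ h f : R,
      S.io (S.X f (S.d (S.rho h))) = S.X f (S.io (S.d (S.rho h))) := by
    intro h f; rw [S.X_drho, S.io_rho, S.io_drho, map_zero]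
  refine S.induction_principle
    (fun b => ∃ q, b ∈ S.Gr q ∧ (∀ f, S.io (S.X f b) = S.X f (S.io b)) ∧
      ∀ (p : ℤ) (a : A), a ∈ S.Gr p → (∀ f, S.io (S.X f a) = S.X f (S.io a)) →
        ∀ f, S.io (S.X f (S.mul a b)) = S.X f (S.io (S.mul a b)))
    ?_ ?_ ?_ _ (fun b hb => hb.choose_spec.2.1) ?_ ?_ ?_
  · intro h
    refine ⟨0, S.hrho0 h, base0 h, ?_⟩
    intro p a ha hFa f
    rw [S.R5 f h ha, S.io_mul_rho, S.io_mul_rho, S.R5 f h (S.hio p a ha), hFa f]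
  · intro h
    refine ⟨1, S.drho_mem h, base1 h, ?_⟩
    intro p a ha hFa f
    rw [S.R6 f h ha, map_sub, S.io_mul_rho, S.io_mul_drho, S.io_mul_drho, map_add,
      S.R6 f h (S.hio p a ha), hFa f]
    have hc := S.T2 a h f
    linear_combination (norm := module) - hc
  · rintro x y ⟨qx, hx, hFx, hTx⟩ ⟨qy, hy, hFy, hTy⟩
    refine ⟨qx + qy, S.hm _ _ _ hx _ hy, hTy qx x hx hFx, ?_⟩
    intro p a ha hFa f
    have h2 := hTy (p + qx) (S.mul a x) (S.hm _ _ _ ha _ hx) (hTx p a ha hFa) f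
    rwa [S.hassoc] at h2
  · intro f; simp
  · intro x y hx hy f
    simp only [map_add]
    linear_combination (norm := module) hx f + hy f
  · intro c x hx f
    simp only [map_smul]
    linear_combination (norm := module) c • hx f


/-- the pair of facts carried through the `T4` induction. -/
def F4 (p : ℤ) (x : A) : Prop :=
  (∀ f : R, S.X f (S.Del x) = S.Del (S.X f x)) ∧
  (∀ f g : R, S.X f (S.Dd g x) + S.Dd g (S.X f x) = ((-1:K)^p) • S.X (S.P g f) x)

lemma jac_rho (f g h : R) :
    S.rho (S.P (S.P h f) g) - S.rho (S.P (S.P h g) f) = - S.rho (S.P h (S.P g f)) := by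
  have hj : S.P (S.P h f) g - S.P (S.P h g) f = - S.P h (S.P g f) := by
    linear_combination S.jac3 f g h
  rw [← map_sub, hj, map_neg]

/-- T4: `X f` commutes with `Δ` (this is where `[π,π] = 0` enters). -/
lemma T4 : ∀ (x : A) (f : R), S.X f (S.Del x) = S.Del (S.X f x) := by
  have base0 : ∀ h : R, S.F4 0 (S.rho h) := by
    intro h
    constructor
    · intro f; rw [S.Del_rho, S.X_rho, map_zero, map_zero]
    · intro f g
      simp only [Dd_apply, S.X_drho, S.X_rho, map_zero, sub_zero, zero_sub, map_neg,
        neg_zero, add_zero, smul_zero]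
  have base1 : ∀ h : R, S.F4 1 (S.d (S.rho h)) := by
    intro h
    constructor
    · intro f; rw [S.Del_drho, S.X_drho, S.Del_rho, map_zero]
    · intro f g
      have e1 : ((-1:K)^(1:ℤ)) = -1 := by norm_num
      simp only [Dd_apply, S.d_drho, map_zero, zero_sub, map_neg, S.X_drho, S.X_rho,
        sub_zero, e1, neg_smul, one_smul]
      have hj := S.jac_rho f g h
      linear_combination (norm := module) hj
  refine S.induction_principle
    (fun b => ∃ q, b ∈ S.Gr q ∧ S.F4 q b ∧
      ∀ (p : ℤ) (a : A), a ∈ S.Gr p → S.F4 p a → S.F4 (p+q) (S.mul a b))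
    ?_ ?_ ?_ _ (fun b hb => hb.choose_spec.2.1.1) ?_ ?_ ?_
  · -- generator ρ h
    intro h
    refine ⟨0, S.hrho0 h, base0 h, ?_⟩
    intro p a ha hFa
    rw [add_zero]
    constructor
    · intro f
      rw [S.R7 h ha, map_add, map_smul, S.R5 f h (S.Del_mem ha), hFa.1 f,
        S.R5 f h ha, S.R7 h (S.X_mem f ha), eps_sub_one]
      have h2 := S.T2 a h f
      linear_combination (norm := module) ((-1:K)^p) • h2
    · intro f g
      rw [S.RD0 g h ha, map_add, map_smul, S.R5 f h (S.Dd_mem g ha),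
        S.R5 f (S.P h g) ha, S.R5 f h ha, S.RD0 g h (S.X_mem f ha), eps_sub_one,
        S.R5 (S.P g f) h ha]
      have hE := congrArg (fun z : A => S.mul z (S.rho h)) (hFa.2 f g)
      simp only [map_add, map_smul, LinearMap.add_apply, LinearMap.smul_apply] at hE
      linear_combination (norm := module) hE
  · -- generator dρ h
    intro h
    refine ⟨1, S.drho_mem h, base1 h, ?_⟩
    intro p a ha hFa
    constructor
    · intro f
      rw [S.R8 h ha, map_sub, map_add, S.R6 f h (S.Del_mem ha), hFa.1 f,
        S.R6 f h ha, map_sub, S.R7 (S.P h f) ha, S.R8 h (S.X_mem f ha)]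
      have hE := hFa.2 f h
      simp only [Dd_apply, map_sub] at hE
      linear_combination (norm := module) hE
    · intro f g
      rw [S.RD1 g h ha, map_sub, map_neg, map_smul, S.R6 f h (S.Dd_mem g ha),
        S.R6 f (S.P h g) ha, S.R6 f h ha, map_sub, S.RD0 g (S.P h f) ha,
        S.RD1 g h (S.X_mem f ha), eps_sub_one, eps_add_one,
        S.R6 (S.P g f) h ha]
      have hE := congrArg (fun z : A => S.mul z (S.d (S.rho h))) (hFa.2 f g)
      simp only [map_add, map_smul, LinearMap.add_apply, LinearMap.smul_apply] at hE
      have hj := congrArg (fun z : A => S.mul a z) (S.jac_rho f g h)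
      simp only [map_sub, map_neg] at hj
      linear_combination (norm := module) hE + ((-1:K)^p) • hj
  · -- products
    rintro x y ⟨qx, hx, hFx, hTx⟩ ⟨qy, hy, hFy, hTy⟩
    refine ⟨qx + qy, S.hm _ _ _ hx _ hy, hTy qx x hx hFx, ?_⟩
    intro p a ha hFa
    have h2 := hTy (p + qx) (S.mul a x) (S.hm _ _ _ ha _ hx) (hTx p a ha hFa)
    rw [S.hassoc] at h2
    have : p + qx + qy = p + (qx + qy) := by ring
    rwa [this] at h2
  · intro f; simp
  · intro x y hx hy f
    simp only [map_add]
    linear_combination (norm := module) hx f + hy f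
  · intro c x hx f
    simp only [map_smul]
    linear_combination (norm := module) c • hx f


lemma Phi_mul_rho {p : ℤ} {a : A} (g : R) (ha : a ∈ S.Gr p) :
    S.Phi (S.mul a (S.rho g)) = S.mul (S.Phi a) (S.rho g) := by
  rw [Phi_apply, S.R7 g ha, map_add, map_smul, S.io_mul_rho, S.io_mul_rho,
    S.R7 g (S.hio p a ha), eps_sub_two, S.T3 a g]
  simp only [Phi_apply, map_sub, LinearMap.sub_apply]
  module

lemma Phi_mul_drho {p : ℤ} {a : A} (g : R) (ha : a ∈ S.Gr p) :
    S.Phi (S.mul a (S.d (S.rho g))) = S.mul (S.Phi a) (S.d (S.rho g)) := by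
  rw [Phi_apply, S.R8 g ha, map_sub, map_add, S.io_mul_drho, S.io_mul_drho, map_add,
    S.R8 g (S.hio p a ha), S.T3 (S.d a) g, S.T4 a g]
  simp only [Phi_apply, Del_apply, map_sub, map_add, LinearMap.sub_apply,
    LinearMap.add_apply]
  rw [S.T3 a g]
  have h4 := S.T4 a g
  simp only [Del_apply, map_sub] at h4
  rw [S.T3 a g] at h4
  linear_combination (norm := module) h4

/-- The main result in operator form. -/
lemma final : ∀ a : A, S.Phi a = 0 := by
  refine S.induction_principle
    (fun b => ∃ q, b ∈ S.Gr q ∧ S.Phi b = 0 ∧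
      ∀ (p : ℤ) (a : A), a ∈ S.Gr p → S.Phi a = 0 → S.Phi (S.mul a b) = 0)
    ?_ ?_ ?_ _ (fun b hb => hb.choose_spec.2.1) ?_ ?_ ?_
  · intro g
    refine ⟨0, S.hrho0 g, ?_, ?_⟩
    · rw [Phi_apply, S.Del_rho, map_zero, S.io_rho, map_zero, sub_zero]
    · intro p a ha hPa
      rw [S.Phi_mul_rho g ha, hPa, map_zero, LinearMap.zero_apply]
  · intro g
    refine ⟨1, S.drho_mem g, ?_, ?_⟩
    · rw [Phi_apply, S.Del_drho, map_zero, S.io_drho, map_zero, sub_zero]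
    · intro p a ha hPa
      rw [S.Phi_mul_drho g ha, hPa, map_zero, LinearMap.zero_apply]
  · rintro x y ⟨qx, hx, hPx, hTx⟩ ⟨qy, hy, hPy, hTy⟩
    refine ⟨qx + qy, S.hm _ _ _ hx _ hy, hTy qx x hx hPx, ?_⟩
    intro p a ha hPa
    have h2 := hTy (p + qx) (S.mul a x) (S.hm _ _ _ ha _ hx) (hTx p a ha hPa)
    rwa [S.hassoc] at h2
  · simp
  · intro x y hx hy; rw [map_add, hx, hy, add_zero]
  · intro c x hx; rw [map_smul, hx, smul_zero]


end Setup
end KoszulBV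


/-- Koszul's theorem (algebraic form): let `R` be the algebra of functions of a Poisson
manifold `(M, π)` with Poisson bracket `P` (`[π,π] = 0` ⟺ `P` satisfies the Jacobi
identity), and let `(A, d, m)` be its de Rham algebra — a graded commutative dg algebra
generated by `R` in degree `0` together with the exact `1`-forms `d(ρ f)`.  Then the
contraction `ι = ι_π` (characterised by vanishing in degrees `0` and `1`, being of order
at most `2` of degree `-2`, and `ι(dρf · dρg) = ρ{f,g}`) makes `(A, d, m, ι)` an exact
BV-algebra: `[ι_π, [ι_π, d]] = ι²d - 2ιdι + dι² = 0`. -/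
theorem poisson_bivector_gives_exact_BV
    {K R A : Type} [Field K] [CharZero K] [CommRing R] [Algebra K R]
    [AddCommGroup A] [Module K A]
    (Gr : ℤ → Submodule K A)
    (m : A →ₗ[K] A →ₗ[K] A) (d : A →ₗ[K] A) (ι : A →ₗ[K] A)
    (ρ : R →ₗ[K] A)
    (P : R →ₗ[K] R →ₗ[K] R)
    -- `P` is a Poisson bracket on the functions `R` (encoding `π` with `[π, π] = 0`)
    (hPanti : ∀ f g : R, P f g = - P g f)
    (hPjac : ∀ f g h : R, P f (P g h) = P (P f g) h + P g (P f h))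
    (hPleib : ∀ f g h : R, P f (g * h) = g * P f h + P f g * h)
    -- `A` is a graded commutative dg algebra with functions `R` in degree `0`
    (hρ0 : ∀ f : R, ρ f ∈ Gr 0)
    (hρm : ∀ f g : R, ρ (f * g) = m (ρ f) (ρ g))
    (hm : ∀ p q : ℤ, ∀ a ∈ Gr p, ∀ x ∈ Gr q, m a x ∈ Gr (p + q))
    (hcomm : ∀ p q : ℤ, ∀ a ∈ Gr p, ∀ x ∈ Gr q, m a x = ((-1 : K) ^ (p * q)) • m x a)
    (hassoc : ∀ a x c : A, m (m a x) c = m a (m x c))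
    (hd : ∀ p : ℤ, ∀ a ∈ Gr p, d a ∈ Gr (p + 1))
    (hdd : ∀ a : A, d (d a) = 0)
    (hder : ∀ p : ℤ, ∀ a ∈ Gr p, ∀ x : A,
        d (m a x) = m (d a) x + ((-1 : K) ^ p) • m a (d x))
    -- `A` is generated, as an algebra, by `ρ(R)` and `d(ρ(R))`
    (hgen : ∀ N : Submodule K A, (∀ f : R, ρ f ∈ N) → (∀ f : R, d (ρ f) ∈ N) →
        (∀ x ∈ N, ∀ y ∈ N, m x y ∈ N) → ∀ a : A, a ∈ N)
    -- `ι = ι_π` has degree `-2`, vanishes in degrees `0` and `1`, and contracts `π`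
    (hι : ∀ p : ℤ, ∀ a ∈ Gr p, ι a ∈ Gr (p - 2))
    (hι0 : ∀ a ∈ Gr 0, ι a = 0)
    (hι1 : ∀ a ∈ Gr 1, ι a = 0)
    (hιP : ∀ f g : R, ι (m (d (ρ f)) (d (ρ g))) = ρ (P f g))
    -- `ι` is an operator of order at most `2` (second-order relation, even degree)
    (hso : ∀ p q r : ℤ, ∀ a ∈ Gr p, ∀ x ∈ Gr q, ∀ c ∈ Gr r,
        ι (m (m a x) c)
          = m (ι (m a x)) c + m a (ι (m x c)) + ((-1 : K) ^ (p * q)) • m x (ι (m a c))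
            - m (m (ι a) x) c - m (m a (ι x)) c - m (m a x) (ι c)) :
    -- the exactness relation `[ι_π, [ι_π, d]] = 0`
    ∀ a : A, ι (ι (d a)) - (2 : K) • ι (d (ι a)) + d (ι (ι a)) = 0 := by
  intro a
  let Sx : KoszulBV.Setup K R A :=
    { Gr := Gr, mul := m, d := d, io := ι, rho := ρ, P := P,
      hPanti := hPanti, hPjac := hPjac, hrho0 := hρ0, hm := hm, hcomm := hcomm,
      hassoc := hassoc, hd := hd, hdd := hdd, hder := hder, hgen := hgen,
      hio := hι, hio0 := hι0, hio1 := hι1, hioP := hιP, hso := hso }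
  have h := Sx.final a
  simp only [KoszulBV.Setup.Phi_apply, KoszulBV.Setup.Del_apply, map_sub] at h
  show ι (ι (d a)) - (2 : K) • ι (d (ι a)) + d (ι (ι a)) = 0
  linear_combination (norm := module) h
end

section
/- Define the tensor product of two cBV-algebras (A, d_A, m_A, Δ_A) and (B, d_B, m_B, Δ_B) by: d(a⊗b) = d_A a ⊗ b + (-1)^{|a|} a ⊗ d_B b, (a⊗b)(a'⊗b') = (-1)^{|b||a'|} aa' ⊗ bb', and Δ(a⊗b) = Δ_A a ⊗ b + (-1)^{|a|} a ⊗ Δ_B b. Then (A⊗B, d, m, Δ) is again a cBV-algebra: Δ has degree -1, Δ² = 0, and Δ satisfies the second-order relation with respect to the tensor product multiplication. Moreover the obstruction satisfies [d, Δ]_{A⊗B} = [d_A, Δ_A] ⊗ id + id ⊗ [d_B, Δ_B]. -/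
open TensorProduct

lemma eps_ne {K : Type} [Field K] : (-1:K) ≠ 0 := by norm_num

lemma eps_eq {K : Type} [Field K] {m n : ℤ} (k : ℤ) (h : m = n + 2*k) : (-1:K)^m = (-1:K)^n := by
  subst h
  rw [zpow_add₀ (by norm_num : (-1:K) ≠ 0), zpow_mul]
  norm_num

lemma eps_mul {K : Type} [Field K] (m n : ℤ) : (-1:K)^m * (-1:K)^n = (-1:K)^(m+n) := by
  rw [zpow_add₀ (by norm_num : (-1:K) ≠ 0)]

lemma eps_succ {K : Type} [Field K] (n : ℤ) : (-1:K)^(n+1) = -(-1:K)^n := by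
  rw [zpow_add₀ eps_ne, zpow_one, mul_neg_one]

lemma eps_pred {K : Type} [Field K] (n : ℤ) : (-1:K)^(n-1) = -(-1:K)^n := by
  rw [eps_eq (K := K) (m := n-1) (n := n+1) (-1) (by ring), eps_succ]

lemma tensor_so_pure {K A B : Type} [Field K]
    [AddCommGroup A] [Module K A] [AddCommGroup B] [Module K B]
    (GA : ℤ → Submodule K A) (GB : ℤ → Submodule K B)
    (mA : A →ₗ[K] A →ₗ[K] A) (ΔA : A →ₗ[K] A)
    (mB : B →ₗ[K] B →ₗ[K] B) (ΔB : B →ₗ[K] B)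
    (hmA : ∀ p q : ℤ, ∀ a ∈ GA p, ∀ x ∈ GA q, mA a x ∈ GA (p + q))
    (hΔA : ∀ p : ℤ, ∀ a ∈ GA p, ΔA a ∈ GA (p - 1))
    (hcommA : ∀ p q : ℤ, ∀ a ∈ GA p, ∀ x ∈ GA q, mA a x = ((-1 : K) ^ (p * q)) • mA x a)
    (hassocA : ∀ a x c : A, mA (mA a x) c = mA a (mA x c))
    (hsoA : ∀ p q r : ℤ, ∀ a ∈ GA p, ∀ x ∈ GA q, ∀ c ∈ GA r,
        ΔA (mA (mA a x) c)
          = mA (ΔA (mA a x)) c + ((-1 : K) ^ p) • mA a (ΔA (mA x c))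
            + ((-1 : K) ^ ((p + 1) * q)) • mA x (ΔA (mA a c))
            - mA (mA (ΔA a) x) c - ((-1 : K) ^ p) • mA (mA a (ΔA x)) c
            - ((-1 : K) ^ (p + q)) • mA (mA a x) (ΔA c))
    (hmB : ∀ p q : ℤ, ∀ b ∈ GB p, ∀ y ∈ GB q, mB b y ∈ GB (p + q))
    (hΔB : ∀ p : ℤ, ∀ b ∈ GB p, ΔB b ∈ GB (p - 1))
    (hcommB : ∀ p q : ℤ, ∀ b ∈ GB p, ∀ y ∈ GB q, mB b y = ((-1 : K) ^ (p * q)) • mB y b)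
    (hassocB : ∀ b y c : B, mB (mB b y) c = mB b (mB y c))
    (hsoB : ∀ p q r : ℤ, ∀ b ∈ GB p, ∀ y ∈ GB q, ∀ c ∈ GB r,
        ΔB (mB (mB b y) c)
          = mB (ΔB (mB b y)) c + ((-1 : K) ^ p) • mB b (ΔB (mB y c))
            + ((-1 : K) ^ ((p + 1) * q)) • mB y (ΔB (mB b c))
            - mB (mB (ΔB b) y) c - ((-1 : K) ^ p) • mB (mB b (ΔB y)) c
            - ((-1 : K) ^ (p + q)) • mB (mB b y) (ΔB c))
    (mT : A ⊗[K] B →ₗ[K] A ⊗[K] B →ₗ[K] A ⊗[K] B)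
    (ΔT : A ⊗[K] B →ₗ[K] A ⊗[K] B)
    (hmT : ∀ p q p' q' : ℤ, ∀ a ∈ GA p, ∀ b ∈ GB q, ∀ a' ∈ GA p', ∀ b' ∈ GB q',
        mT (a ⊗ₜ[K] b) (a' ⊗ₜ[K] b')
          = ((-1 : K) ^ (q * p')) • (mA a a' ⊗ₜ[K] mB b b'))
    (hΔT : ∀ p q : ℤ, ∀ a ∈ GA p, ∀ b ∈ GB q,
        ΔT (a ⊗ₜ[K] b) = ΔA a ⊗ₜ[K] b + ((-1 : K) ^ p) • (a ⊗ₜ[K] ΔB b))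
    (p₁ q₁ p₂ q₂ p₃ q₃ : ℤ) (a₁ a₂ a₃ : A) (b₁ b₂ b₃ : B)
    (ha1 : a₁ ∈ GA p₁) (hb1 : b₁ ∈ GB q₁) (ha2 : a₂ ∈ GA p₂) (hb2 : b₂ ∈ GB q₂)
    (ha3 : a₃ ∈ GA p₃) (hb3 : b₃ ∈ GB q₃) :
    ΔT (mT (mT (a₁ ⊗ₜ[K] b₁) (a₂ ⊗ₜ[K] b₂)) (a₃ ⊗ₜ[K] b₃))
      = mT (ΔT (mT (a₁ ⊗ₜ[K] b₁) (a₂ ⊗ₜ[K] b₂))) (a₃ ⊗ₜ[K] b₃)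
        + ((-1 : K) ^ (p₁ + q₁)) •
            mT (a₁ ⊗ₜ[K] b₁) (ΔT (mT (a₂ ⊗ₜ[K] b₂) (a₃ ⊗ₜ[K] b₃)))
        + ((-1 : K) ^ ((p₁ + q₁ + 1) * (p₂ + q₂))) •
            mT (a₂ ⊗ₜ[K] b₂) (ΔT (mT (a₁ ⊗ₜ[K] b₁) (a₃ ⊗ₜ[K] b₃)))
        - mT (mT (ΔT (a₁ ⊗ₜ[K] b₁)) (a₂ ⊗ₜ[K] b₂)) (a₃ ⊗ₜ[K] b₃)
        - ((-1 : K) ^ (p₁ + q₁)) •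
            mT (mT (a₁ ⊗ₜ[K] b₁) (ΔT (a₂ ⊗ₜ[K] b₂))) (a₃ ⊗ₜ[K] b₃)
        - ((-1 : K) ^ (p₁ + q₁ + (p₂ + q₂))) •
            mT (mT (a₁ ⊗ₜ[K] b₁) (a₂ ⊗ₜ[K] b₂)) (ΔT (a₃ ⊗ₜ[K] b₃)) := by
  have hA12 := hmA p₁ p₂ a₁ ha1 a₂ ha2
  have hA13 := hmA p₁ p₃ a₁ ha1 a₃ ha3
  have hA23 := hmA p₂ p₃ a₂ ha2 a₃ ha3
  have hA123 := hmA (p₁+p₂) p₃ _ hA12 a₃ ha3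
  have hB12 := hmB q₁ q₂ b₁ hb1 b₂ hb2
  have hB13 := hmB q₁ q₃ b₁ hb1 b₃ hb3
  have hB23 := hmB q₂ q₃ b₂ hb2 b₃ hb3
  have hB123 := hmB (q₁+q₂) q₃ _ hB12 b₃ hb3
  have hDA1 := hΔA p₁ a₁ ha1
  have hDA2 := hΔA p₂ a₂ ha2
  have hDA3 := hΔA p₃ a₃ ha3
  have hDA12 := hΔA (p₁+p₂) _ hA12
  have hDA13 := hΔA (p₁+p₃) _ hA13
  have hDA23 := hΔA (p₂+p₃) _ hA23
  have hDB1 := hΔB q₁ b₁ hb1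
  have hDB2 := hΔB q₂ b₂ hb2
  have hDB3 := hΔB q₃ b₃ hb3
  have hDB12 := hΔB (q₁+q₂) _ hB12
  have hDB13 := hΔB (q₁+q₃) _ hB13
  have hDB23 := hΔB (q₂+q₃) _ hB23
  have hxy := hmT p₁ q₁ p₂ q₂ a₁ ha1 b₁ hb1 a₂ ha2 b₂ hb2
  have hyz := hmT p₂ q₂ p₃ q₃ a₂ ha2 b₂ hb2 a₃ ha3 b₃ hb3
  have hxz := hmT p₁ q₁ p₃ q₃ a₁ ha1 b₁ hb1 a₃ ha3 b₃ hb3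
  have hb213 : mB b₂ (mB b₁ b₃) = ((-1:K)^(q₁*q₂)) • mB (mB b₁ b₂) b₃ := by
    rw [hcommB q₁ q₂ b₁ hb1 b₂ hb2, map_smul, LinearMap.smul_apply, hassocB b₂ b₁ b₃,
      smul_smul, ← zpow_add₀ eps_ne,
      show ((-1:K)^(q₁*q₂+q₁*q₂)) = ((-1:K)^(0:ℤ)) from eps_eq (q₁*q₂) (by ring),
      zpow_zero, one_smul]
  have ha213 : mA a₂ (mA a₁ a₃) = ((-1:K)^(p₁*p₂)) • mA (mA a₁ a₂) a₃ := by
    rw [hcommA p₁ p₂ a₁ ha1 a₂ ha2, map_smul, LinearMap.smul_apply, hassocA a₂ a₁ a₃,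
      smul_smul, ← zpow_add₀ eps_ne,
      show ((-1:K)^(p₁*p₂+p₁*p₂)) = ((-1:K)^(0:ℤ)) from eps_eq (p₁*p₂) (by ring),
      zpow_zero, one_smul]
  have hL : ΔT (mT (mT (a₁ ⊗ₜ[K] b₁) (a₂ ⊗ₜ[K] b₂)) (a₃ ⊗ₜ[K] b₃))
      = ((-1:K)^(q₁*p₂+(q₁+q₂)*p₃)) •
          (mA (ΔA (mA a₁ a₂)) a₃ ⊗ₜ[K] mB (mB b₁ b₂) b₃)
        + ((-1:K)^(q₁*p₂+(q₁+q₂)*p₃+p₁)) •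
          (mA a₁ (ΔA (mA a₂ a₃)) ⊗ₜ[K] mB (mB b₁ b₂) b₃)
        + ((-1:K)^(q₁*p₂+(q₁+q₂)*p₃+(p₁+1)*p₂)) •
          (mA a₂ (ΔA (mA a₁ a₃)) ⊗ₜ[K] mB (mB b₁ b₂) b₃)
        - ((-1:K)^(q₁*p₂+(q₁+q₂)*p₃)) •
          (mA (mA (ΔA a₁) a₂) a₃ ⊗ₜ[K] mB (mB b₁ b₂) b₃)
        - ((-1:K)^(q₁*p₂+(q₁+q₂)*p₃+p₁)) •
          (mA (mA a₁ (ΔA a₂)) a₃ ⊗ₜ[K] mB (mB b₁ b₂) b₃)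
        - ((-1:K)^(q₁*p₂+(q₁+q₂)*p₃+p₁+p₂)) •
          (mA (mA a₁ a₂) (ΔA a₃) ⊗ₜ[K] mB (mB b₁ b₂) b₃)
        + ((-1:K)^(q₁*p₂+(q₁+q₂)*p₃+(p₁+p₂+p₃))) •
          (mA (mA a₁ a₂) a₃ ⊗ₜ[K] mB (ΔB (mB b₁ b₂)) b₃)
        + ((-1:K)^(q₁*p₂+(q₁+q₂)*p₃+(p₁+p₂+p₃)+q₁)) •
          (mA (mA a₁ a₂) a₃ ⊗ₜ[K] mB b₁ (ΔB (mB b₂ b₃)))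
        + ((-1:K)^(q₁*p₂+(q₁+q₂)*p₃+(p₁+p₂+p₃)+(q₁+1)*q₂)) •
          (mA (mA a₁ a₂) a₃ ⊗ₜ[K] mB b₂ (ΔB (mB b₁ b₃)))
        - ((-1:K)^(q₁*p₂+(q₁+q₂)*p₃+(p₁+p₂+p₃))) •
          (mA (mA a₁ a₂) a₃ ⊗ₜ[K] mB (mB (ΔB b₁) b₂) b₃)
        - ((-1:K)^(q₁*p₂+(q₁+q₂)*p₃+(p₁+p₂+p₃)+q₁)) •
          (mA (mA a₁ a₂) a₃ ⊗ₜ[K] mB (mB b₁ (ΔB b₂)) b₃)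
        - ((-1:K)^(q₁*p₂+(q₁+q₂)*p₃+(p₁+p₂+p₃)+q₁+q₂)) •
          (mA (mA a₁ a₂) a₃ ⊗ₜ[K] mB (mB b₁ b₂) (ΔB b₃)) := by
    rw [hxy]
    simp only [map_smul, LinearMap.smul_apply]
    rw [hmT (p₁+p₂) (q₁+q₂) p₃ q₃ _ hA12 _ hB12 a₃ ha3 b₃ hb3]
    simp only [map_smul]
    rw [hΔT (p₁+p₂+p₃) (q₁+q₂+q₃) _ hA123 _ hB123,
      hsoA p₁ p₂ p₃ a₁ ha1 a₂ ha2 a₃ ha3,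
      hsoB q₁ q₂ q₃ b₁ hb1 b₂ hb2 b₃ hb3]
    simp only [add_tmul, sub_tmul, tmul_add, tmul_sub, ← smul_tmul', tmul_smul,
      smul_add, smul_sub, smul_smul]
    match_scalars <;>
      simp only [eps_mul, mul_one, one_mul, neg_mul, mul_neg, neg_neg, neg_inj] <;>
      (first | rfl | (apply eps_eq 0; ring1))
  have H1 : mT (ΔT (mT (a₁ ⊗ₜ[K] b₁) (a₂ ⊗ₜ[K] b₂))) (a₃ ⊗ₜ[K] b₃)
      = ((-1:K)^(q₁*p₂+(q₁+q₂)*p₃)) •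
          (mA (ΔA (mA a₁ a₂)) a₃ ⊗ₜ[K] mB (mB b₁ b₂) b₃)
        + ((-1:K)^(q₁*p₂+(q₁+q₂)*p₃+(p₁+p₂+p₃))) •
          (mA (mA a₁ a₂) a₃ ⊗ₜ[K] mB (ΔB (mB b₁ b₂)) b₃) := by
    rw [hxy]
    simp only [map_smul, LinearMap.smul_apply]
    rw [hΔT (p₁+p₂) (q₁+q₂) _ hA12 _ hB12]
    simp only [map_add, map_smul, LinearMap.add_apply, LinearMap.smul_apply]
    rw [hmT (p₁+p₂-1) (q₁+q₂) p₃ q₃ _ hDA12 _ hB12 a₃ ha3 b₃ hb3,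
      hmT (p₁+p₂) (q₁+q₂-1) p₃ q₃ _ hA12 _ hDB12 a₃ ha3 b₃ hb3]
    simp only [tmul_smul, ← smul_tmul', smul_add, smul_smul]
    match_scalars <;>
      simp only [eps_mul, mul_one, one_mul, neg_mul, mul_neg, neg_neg, neg_inj] <;>
      (first
        | rfl
        | (apply eps_eq 0; ring1)
        | (apply eps_eq (-p₃); ring1)
        | (apply eps_eq (-p₂-p₃); ring1)
        | (apply eps_eq (p₁*q₂+q₁*q₂); ring1)
        | (apply eps_eq (p₁*p₂+p₁*q₂); ring1))
  have H2 : ((-1 : K) ^ (p₁ + q₁)) •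
        mT (a₁ ⊗ₜ[K] b₁) (ΔT (mT (a₂ ⊗ₜ[K] b₂) (a₃ ⊗ₜ[K] b₃)))
      = ((-1:K)^(q₁*p₂+(q₁+q₂)*p₃+p₁)) •
          (mA a₁ (ΔA (mA a₂ a₃)) ⊗ₜ[K] mB (mB b₁ b₂) b₃)
        + ((-1:K)^(q₁*p₂+(q₁+q₂)*p₃+(p₁+p₂+p₃)+q₁)) •
          (mA (mA a₁ a₂) a₃ ⊗ₜ[K] mB b₁ (ΔB (mB b₂ b₃))) := by
    rw [hyz]
    simp only [map_smul]
    rw [hΔT (p₂+p₃) (q₂+q₃) _ hA23 _ hB23]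
    simp only [map_add, map_smul]
    rw [hmT p₁ q₁ (p₂+p₃-1) (q₂+q₃) a₁ ha1 b₁ hb1 _ hDA23 _ hB23,
      hmT p₁ q₁ (p₂+p₃) (q₂+q₃-1) a₁ ha1 b₁ hb1 _ hA23 _ hDB23,
      show mB b₁ (mB b₂ b₃) = mB (mB b₁ b₂) b₃ from (hassocB b₁ b₂ b₃).symm,
      show mA a₁ (mA a₂ a₃) = mA (mA a₁ a₂) a₃ from (hassocA a₁ a₂ a₃).symm]
    simp only [tmul_smul, ← smul_tmul', smul_add, smul_smul]
    match_scalars <;>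
      simp only [eps_mul, mul_one, one_mul, neg_mul, mul_neg, neg_neg, neg_inj] <;>
      (first
        | rfl
        | (apply eps_eq 0; ring1)
        | (apply eps_eq (-p₃); ring1)
        | (apply eps_eq (-p₂-p₃); ring1)
        | (apply eps_eq (p₁*q₂+q₁*q₂); ring1)
        | (apply eps_eq (p₁*p₂+p₁*q₂); ring1))
  have H3 : ((-1 : K) ^ ((p₁ + q₁ + 1) * (p₂ + q₂))) •
        mT (a₂ ⊗ₜ[K] b₂) (ΔT (mT (a₁ ⊗ₜ[K] b₁) (a₃ ⊗ₜ[K] b₃)))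
      = ((-1:K)^(q₁*p₂+(q₁+q₂)*p₃+(p₁+1)*p₂)) •
          (mA a₂ (ΔA (mA a₁ a₃)) ⊗ₜ[K] mB (mB b₁ b₂) b₃)
        + ((-1:K)^(q₁*p₂+(q₁+q₂)*p₃+(p₁+p₂+p₃)+(q₁+1)*q₂)) •
          (mA (mA a₁ a₂) a₃ ⊗ₜ[K] mB b₂ (ΔB (mB b₁ b₃))) := by
    rw [hxz]
    simp only [map_smul]
    rw [hΔT (p₁+p₃) (q₁+q₃) _ hA13 _ hB13]
    simp only [map_add, map_smul]
    rw [hmT p₂ q₂ (p₁+p₃-1) (q₁+q₃) a₂ ha2 b₂ hb2 _ hDA13 _ hB13,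
      hmT p₂ q₂ (p₁+p₃) (q₁+q₃-1) a₂ ha2 b₂ hb2 _ hA13 _ hDB13,
      hb213, ha213]
    simp only [tmul_smul, ← smul_tmul', smul_add, smul_smul]
    match_scalars <;>
      simp only [eps_mul, mul_one, one_mul, neg_mul, mul_neg, neg_neg, neg_inj] <;>
      (first
        | rfl
        | (apply eps_eq 0; ring1)
        | (apply eps_eq (-p₃); ring1)
        | (apply eps_eq (-p₂-p₃); ring1)
        | (apply eps_eq (p₁*q₂+q₁*q₂); ring1)
        | (apply eps_eq (p₁*p₂+p₁*q₂); ring1))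
  have H4 : mT (mT (ΔT (a₁ ⊗ₜ[K] b₁)) (a₂ ⊗ₜ[K] b₂)) (a₃ ⊗ₜ[K] b₃)
      = ((-1:K)^(q₁*p₂+(q₁+q₂)*p₃)) •
          (mA (mA (ΔA a₁) a₂) a₃ ⊗ₜ[K] mB (mB b₁ b₂) b₃)
        + ((-1:K)^(q₁*p₂+(q₁+q₂)*p₃+(p₁+p₂+p₃))) •
          (mA (mA a₁ a₂) a₃ ⊗ₜ[K] mB (mB (ΔB b₁) b₂) b₃) := by
    rw [hΔT p₁ q₁ a₁ ha1 b₁ hb1]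
    simp only [map_add, map_smul, LinearMap.add_apply, LinearMap.smul_apply]
    rw [hmT (p₁-1) q₁ p₂ q₂ _ hDA1 b₁ hb1 a₂ ha2 b₂ hb2,
      hmT p₁ (q₁-1) p₂ q₂ a₁ ha1 _ hDB1 a₂ ha2 b₂ hb2]
    simp only [map_smul, LinearMap.smul_apply]
    rw [hmT (p₁-1+p₂) (q₁+q₂) p₃ q₃ _ (hmA (p₁-1) p₂ _ hDA1 a₂ ha2) _ hB12 a₃ ha3 b₃ hb3,
      hmT (p₁+p₂) (q₁-1+q₂) p₃ q₃ _ hA12 _ (hmB (q₁-1) q₂ _ hDB1 b₂ hb2) a₃ ha3 b₃ hb3]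
    simp only [tmul_smul, ← smul_tmul', smul_add, smul_smul]
    match_scalars <;>
      simp only [eps_mul, mul_one, one_mul, neg_mul, mul_neg, neg_neg, neg_inj] <;>
      (first
        | rfl
        | (apply eps_eq 0; ring1)
        | (apply eps_eq (-p₃); ring1)
        | (apply eps_eq (-p₂-p₃); ring1)
        | (apply eps_eq (p₁*q₂+q₁*q₂); ring1)
        | (apply eps_eq (p₁*p₂+p₁*q₂); ring1))
  have H5 : ((-1 : K) ^ (p₁ + q₁)) •
        mT (mT (a₁ ⊗ₜ[K] b₁) (ΔT (a₂ ⊗ₜ[K] b₂))) (a₃ ⊗ₜ[K] b₃)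
      = ((-1:K)^(q₁*p₂+(q₁+q₂)*p₃+p₁)) •
          (mA (mA a₁ (ΔA a₂)) a₃ ⊗ₜ[K] mB (mB b₁ b₂) b₃)
        + ((-1:K)^(q₁*p₂+(q₁+q₂)*p₃+(p₁+p₂+p₃)+q₁)) •
          (mA (mA a₁ a₂) a₃ ⊗ₜ[K] mB (mB b₁ (ΔB b₂)) b₃) := by
    rw [hΔT p₂ q₂ a₂ ha2 b₂ hb2]
    simp only [map_add, map_smul, LinearMap.add_apply, LinearMap.smul_apply]
    rw [hmT p₁ q₁ (p₂-1) q₂ a₁ ha1 b₁ hb1 _ hDA2 b₂ hb2,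
      hmT p₁ q₁ p₂ (q₂-1) a₁ ha1 b₁ hb1 a₂ ha2 _ hDB2]
    simp only [map_smul, LinearMap.smul_apply]
    rw [hmT (p₁+(p₂-1)) (q₁+q₂) p₃ q₃ _ (hmA p₁ (p₂-1) a₁ ha1 _ hDA2) _ hB12 a₃ ha3 b₃ hb3,
      hmT (p₁+p₂) (q₁+(q₂-1)) p₃ q₃ _ hA12 _ (hmB q₁ (q₂-1) b₁ hb1 _ hDB2) a₃ ha3 b₃ hb3]
    simp only [tmul_smul, ← smul_tmul', smul_add, smul_smul]
    match_scalars <;>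
      simp only [eps_mul, mul_one, one_mul, neg_mul, mul_neg, neg_neg, neg_inj] <;>
      (first
        | rfl
        | (apply eps_eq 0; ring1)
        | (apply eps_eq (-p₃); ring1)
        | (apply eps_eq (-p₂-p₃); ring1)
        | (apply eps_eq (p₁*q₂+q₁*q₂); ring1)
        | (apply eps_eq (p₁*p₂+p₁*q₂); ring1))
  have H6 : ((-1 : K) ^ (p₁ + q₁ + (p₂ + q₂))) •
        mT (mT (a₁ ⊗ₜ[K] b₁) (a₂ ⊗ₜ[K] b₂)) (ΔT (a₃ ⊗ₜ[K] b₃))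
      = ((-1:K)^(q₁*p₂+(q₁+q₂)*p₃+p₁+p₂)) •
          (mA (mA a₁ a₂) (ΔA a₃) ⊗ₜ[K] mB (mB b₁ b₂) b₃)
        + ((-1:K)^(q₁*p₂+(q₁+q₂)*p₃+(p₁+p₂+p₃)+q₁+q₂)) •
          (mA (mA a₁ a₂) a₃ ⊗ₜ[K] mB (mB b₁ b₂) (ΔB b₃)) := by
    rw [hxy, hΔT p₃ q₃ a₃ ha3 b₃ hb3]
    simp only [map_add, map_smul, LinearMap.add_apply, LinearMap.smul_apply]
    rw [hmT (p₁+p₂) (q₁+q₂) (p₃-1) q₃ _ hA12 _ hB12 _ hDA3 b₃ hb3,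
      hmT (p₁+p₂) (q₁+q₂) p₃ (q₃-1) _ hA12 _ hB12 a₃ ha3 _ hDB3]
    simp only [tmul_smul, ← smul_tmul', smul_add, smul_smul]
    match_scalars <;>
      simp only [eps_mul, mul_one, one_mul, neg_mul, mul_neg, neg_neg, neg_inj] <;>
      (first
        | rfl
        | (apply eps_eq 0; ring1)
        | (apply eps_eq (-p₃); ring1)
        | (apply eps_eq (-p₂-p₃); ring1)
        | (apply eps_eq (p₁*q₂+q₁*q₂); ring1)
        | (apply eps_eq (p₁*p₂+p₁*q₂); ring1))
  rw [hL, H1, H2, H3, H4, H5, H6]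
  module

/-- The grading on `A ⊗ B` induced by gradings on `A` and `B`. -/
def tensorGrade {K A B : Type} [Field K]
    [AddCommGroup A] [Module K A] [AddCommGroup B] [Module K B]
    (GA : ℤ → Submodule K A) (GB : ℤ → Submodule K B) (n : ℤ) :
    Submodule K (A ⊗[K] B) :=
  Submodule.span K {x : A ⊗[K] B |
    ∃ (pd qd : ℤ) (a : A) (b : B), a ∈ GA pd ∧ b ∈ GB qd ∧ pd + qd = n ∧ x = a ⊗ₜ[K] b}

/-- The tensor product of two cBV-algebras, with the differential, product and operator
defined by the canonical operadic diagonal (with Koszul signs), is again a cBV-algebra: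
`Δ` has degree `-1`, squares to zero, satisfies the second-order relation, and the
obstruction of the tensor product is `[d_A, Δ_A] ⊗ id + id ⊗ [d_B, Δ_B]`. -/
theorem tensor_product_of_cBV_algebras
    {K A B : Type} [Field K] [CharZero K]
    [AddCommGroup A] [Module K A] [AddCommGroup B] [Module K B]
    (GA : ℤ → Submodule K A) (GB : ℤ → Submodule K B)
    (mA : A →ₗ[K] A →ₗ[K] A) (dA : A →ₗ[K] A) (ΔA : A →ₗ[K] A)
    (mB : B →ₗ[K] B →ₗ[K] B) (dB : B →ₗ[K] B) (ΔB : B →ₗ[K] B)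
    -- cBV-algebra structure on A
    (hmA : ∀ p q : ℤ, ∀ a ∈ GA p, ∀ x ∈ GA q, mA a x ∈ GA (p + q))
    (hdA : ∀ p : ℤ, ∀ a ∈ GA p, dA a ∈ GA (p + 1))
    (hΔA : ∀ p : ℤ, ∀ a ∈ GA p, ΔA a ∈ GA (p - 1))
    (hdAdA : ∀ a : A, dA (dA a) = 0)
    (hΔAΔA : ∀ a : A, ΔA (ΔA a) = 0)
    (hcommA : ∀ p q : ℤ, ∀ a ∈ GA p, ∀ x ∈ GA q, mA a x = ((-1 : K) ^ (p * q)) • mA x a)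
    (hassocA : ∀ a x c : A, mA (mA a x) c = mA a (mA x c))
    (hderA : ∀ p : ℤ, ∀ a ∈ GA p, ∀ x : A,
        dA (mA a x) = mA (dA a) x + ((-1 : K) ^ p) • mA a (dA x))
    (hsoA : ∀ p q r : ℤ, ∀ a ∈ GA p, ∀ x ∈ GA q, ∀ c ∈ GA r,
        ΔA (mA (mA a x) c)
          = mA (ΔA (mA a x)) c + ((-1 : K) ^ p) • mA a (ΔA (mA x c))
            + ((-1 : K) ^ ((p + 1) * q)) • mA x (ΔA (mA a c))
            - mA (mA (ΔA a) x) c - ((-1 : K) ^ p) • mA (mA a (ΔA x)) c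
            - ((-1 : K) ^ (p + q)) • mA (mA a x) (ΔA c))
    -- cBV-algebra structure on B
    (hmB : ∀ p q : ℤ, ∀ b ∈ GB p, ∀ y ∈ GB q, mB b y ∈ GB (p + q))
    (hdB : ∀ p : ℤ, ∀ b ∈ GB p, dB b ∈ GB (p + 1))
    (hΔB : ∀ p : ℤ, ∀ b ∈ GB p, ΔB b ∈ GB (p - 1))
    (hdBdB : ∀ b : B, dB (dB b) = 0)
    (hΔBΔB : ∀ b : B, ΔB (ΔB b) = 0)
    (hcommB : ∀ p q : ℤ, ∀ b ∈ GB p, ∀ y ∈ GB q, mB b y = ((-1 : K) ^ (p * q)) • mB y b)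
    (hassocB : ∀ b y c : B, mB (mB b y) c = mB b (mB y c))
    (hderB : ∀ p : ℤ, ∀ b ∈ GB p, ∀ y : B,
        dB (mB b y) = mB (dB b) y + ((-1 : K) ^ p) • mB b (dB y))
    (hsoB : ∀ p q r : ℤ, ∀ b ∈ GB p, ∀ y ∈ GB q, ∀ c ∈ GB r,
        ΔB (mB (mB b y) c)
          = mB (ΔB (mB b y)) c + ((-1 : K) ^ p) • mB b (ΔB (mB y c))
            + ((-1 : K) ^ ((p + 1) * q)) • mB y (ΔB (mB b c))
            - mB (mB (ΔB b) y) c - ((-1 : K) ^ p) • mB (mB b (ΔB y)) c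
            - ((-1 : K) ^ (p + q)) • mB (mB b y) (ΔB c))
    -- structure maps of the tensor product, determined on homogeneous pure tensors
    (dT : A ⊗[K] B →ₗ[K] A ⊗[K] B)
    (mT : A ⊗[K] B →ₗ[K] A ⊗[K] B →ₗ[K] A ⊗[K] B)
    (ΔT : A ⊗[K] B →ₗ[K] A ⊗[K] B)
    (hdT : ∀ p q : ℤ, ∀ a ∈ GA p, ∀ b ∈ GB q,
        dT (a ⊗ₜ[K] b) = dA a ⊗ₜ[K] b + ((-1 : K) ^ p) • (a ⊗ₜ[K] dB b))
    (hmT : ∀ p q p' q' : ℤ, ∀ a ∈ GA p, ∀ b ∈ GB q, ∀ a' ∈ GA p', ∀ b' ∈ GB q',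
        mT (a ⊗ₜ[K] b) (a' ⊗ₜ[K] b')
          = ((-1 : K) ^ (q * p')) • (mA a a' ⊗ₜ[K] mB b b'))
    (hΔT : ∀ p q : ℤ, ∀ a ∈ GA p, ∀ b ∈ GB q,
        ΔT (a ⊗ₜ[K] b) = ΔA a ⊗ₜ[K] b + ((-1 : K) ^ p) • (a ⊗ₜ[K] ΔB b))
    -- homogeneous pure tensors span the tensor product
    (hspan : Submodule.span K {x : A ⊗[K] B |
        ∃ (pd qd : ℤ) (a : A) (b : B), a ∈ GA pd ∧ b ∈ GB qd ∧ x = a ⊗ₜ[K] b} = ⊤) :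
    -- (1) `Δ` on the tensor product has degree `-1`
    (∀ p q : ℤ, ∀ a ∈ GA p, ∀ b ∈ GB q,
        ΔT (a ⊗ₜ[K] b) ∈ tensorGrade GA GB (p + q - 1))
    -- (2) `Δ` squares to zero
    ∧ (∀ x : A ⊗[K] B, ΔT (ΔT x) = 0)
    -- (3) `Δ` satisfies the second-order relation for the tensor product multiplication
    ∧ (∀ P Q R : ℤ, ∀ x ∈ tensorGrade GA GB P, ∀ y ∈ tensorGrade GA GB Q,
          ∀ z ∈ tensorGrade GA GB R,
        ΔT (mT (mT x y) z)
          = mT (ΔT (mT x y)) z + ((-1 : K) ^ P) • mT x (ΔT (mT y z))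
            + ((-1 : K) ^ ((P + 1) * Q)) • mT y (ΔT (mT x z))
            - mT (mT (ΔT x) y) z - ((-1 : K) ^ P) • mT (mT x (ΔT y)) z
            - ((-1 : K) ^ (P + Q)) • mT (mT x y) (ΔT z))
    -- (4) the obstruction of the tensor product is the sum of the obstructions
    ∧ (∀ p q : ℤ, ∀ a ∈ GA p, ∀ b ∈ GB q,
        dT (ΔT (a ⊗ₜ[K] b)) + ΔT (dT (a ⊗ₜ[K] b))
          = (dA (ΔA a) + ΔA (dA a)) ⊗ₜ[K] b + a ⊗ₜ[K] (dB (ΔB b) + ΔB (dB b))) := by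
  refine ⟨?_, ?_, ?_, ?_⟩
  · -- (1)
    intro p q a ha b hb
    rw [hΔT p q a ha b hb]
    unfold tensorGrade
    refine Submodule.add_mem _ ?_ (Submodule.smul_mem _ _ ?_)
    · exact Submodule.subset_span ⟨p - 1, q, ΔA a, b, hΔA p a ha, hb, by ring, rfl⟩
    · exact Submodule.subset_span ⟨p, q - 1, a, ΔB b, ha, hΔB q b hb, by ring, rfl⟩
  · -- (2)
    intro x
    have hx : x ∈ Submodule.span K {x : A ⊗[K] B |
        ∃ (pd qd : ℤ) (a : A) (b : B), a ∈ GA pd ∧ b ∈ GB qd ∧ x = a ⊗ₜ[K] b} := by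
      rw [hspan]; exact Submodule.mem_top
    induction hx using Submodule.span_induction with
    | mem x hxs =>
      obtain ⟨p, q, a, b, ha, hb, rfl⟩ := hxs
      rw [hΔT p q a ha b hb, map_add, map_smul, hΔT (p-1) q _ (hΔA p a ha) b hb,
        hΔT p (q-1) a ha _ (hΔB q b hb), hΔAΔA, hΔBΔB]
      simp only [zero_tmul, tmul_zero, smul_zero, add_zero, zero_add, eps_pred]
      module
    | zero => simp
    | add u v _ _ ihu ihv => simp only [map_add, ihu, ihv, add_zero]
    | smul c u _ ih => simp only [map_smul, ih, smul_zero]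
  · -- (3)
    intro P Q R x hx y hy z hz
    unfold tensorGrade at hx hy hz
    induction hx using Submodule.span_induction with
    | mem x hxs =>
      induction hy using Submodule.span_induction with
      | mem y hys =>
        induction hz using Submodule.span_induction with
        | mem z hzs =>
          obtain ⟨p₁, q₁, a₁, b₁, ha1, hb1, hP, rfl⟩ := hxs
          obtain ⟨p₂, q₂, a₂, b₂, ha2, hb2, hQ, rfl⟩ := hys
          obtain ⟨p₃, q₃, a₃, b₃, ha3, hb3, hR, rfl⟩ := hzs
          subst hP; subst hQ; subst hR
          exact tensor_so_pure GA GB mA ΔA mB ΔB hmA hΔA hcommA hassocA hsoA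
            hmB hΔB hcommB hassocB hsoB mT ΔT hmT hΔT
            p₁ q₁ p₂ q₂ p₃ q₃ a₁ a₂ a₃ b₁ b₂ b₃ ha1 hb1 ha2 hb2 ha3 hb3
        | zero => simp
        | add u v _ _ ihu ihv =>
          simp only [map_add, LinearMap.add_apply, smul_add]
          rw [ihu, ihv]; module
        | smul c u _ ih =>
          simp only [map_smul, LinearMap.smul_apply]
          rw [ih]; module
      | zero => simp
      | add u v _ _ ihu ihv =>
        simp only [map_add, LinearMap.add_apply, smul_add]
        rw [ihu, ihv]; module
      | smul c u _ ih =>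
        simp only [map_smul, LinearMap.smul_apply]
        rw [ih]; module
    | zero => simp
    | add u v _ _ ihu ihv =>
      simp only [map_add, LinearMap.add_apply, smul_add]
      rw [ihu, ihv]; module
    | smul c u _ ih =>
      simp only [map_smul, LinearMap.smul_apply]
      rw [ih]; module
  · -- (4)
    intro p q a ha b hb
    rw [hΔT p q a ha b hb, hdT p q a ha b hb, map_add, map_add, map_smul, map_smul,
      hdT (p-1) q _ (hΔA p a ha) b hb, hdT p (q-1) a ha _ (hΔB q b hb),
      hΔT (p+1) q _ (hdA p a ha) b hb, hΔT p (q+1) a ha _ (hdB q b hb)]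
    simp only [add_tmul, tmul_add, smul_add, smul_smul, eps_pred, eps_succ]
    match_scalars <;>
      simp only [eps_mul, mul_one, one_mul, neg_mul, mul_neg, neg_neg] <;>
      (first
        | ring1
        | (rw [eps_eq (K := K) (m := p + p) (n := 0) p (by ring1)]; norm_num))
end
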